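/- arXiv:2509.25614 — 6 statements merged into one kernel-verified Lean document; each statement's English description precedes it below -/
import Mathlib

section
/- Let n and d be positive integers, L ≥ 0, λ_v > 0, x ∈ ℝⁿ and a ≥ 0 a real number. Let f: ℝᵈ → ℝ be differentiable and satisfy f(v′) − f(v) ≥ ∇f(v)·(v′−v) + λ_v|v′−v|² for all v, v′ ∈ ℝᵈ, together with |∇f(0)| ≤ L(1+|x|+a). Let M be a real n×d matrix with |Mw| ≤ L|w| for every w ∈ ℝᵈ, and suppose u ∈ ℝᵈ and p ∈ ℝⁿ satisfy the first-order condition Mᵀp + ∇f(u) = 0. Then |u| ≤ (L/(2λ_v))(1+|p|+|x|+a). -/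
open scoped RealInnerProductSpace Matrix

/-- Cone property for the optimal control: under strong convexity of `f` in the control,
growth of `∇f(0)`, boundedness of `M`, and the first-order condition `Mᵀ p + ∇f(u) = 0`,
one has `|u| ≤ (L/(2 λ_v))(1 + |p| + |x| + a)`. -/
theorem cone_property_control
    (n d : ℕ) (hn : 0 < n) (hd : 0 < d)
    (L : ℝ) (hL : 0 ≤ L) (lamv : ℝ) (hlamv : 0 < lamv)
    (x : EuclideanSpace ℝ (Fin n)) (a : ℝ) (ha : 0 ≤ a)
    (f : EuclideanSpace ℝ (Fin d) → ℝ) (hf : Differentiable ℝ f)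
    (hconv : ∀ v v' : EuclideanSpace ℝ (Fin d),
      f v' - f v ≥ ⟪gradient f v, v' - v⟫ + lamv * ‖v' - v‖ ^ 2)
    (hgrad0 : ‖gradient f 0‖ ≤ L * (1 + ‖x‖ + a))
    (M : Matrix (Fin n) (Fin d) ℝ)
    (hMbound : ∀ w : EuclideanSpace ℝ (Fin d),
      ‖Matrix.toEuclideanLin M w‖ ≤ L * ‖w‖)
    (u : EuclideanSpace ℝ (Fin d)) (p : EuclideanSpace ℝ (Fin n))
    (hfoc : Matrix.toEuclideanLin Mᵀ p + gradient f u = 0) :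
    ‖u‖ ≤ L / (2 * lamv) * (1 + ‖p‖ + ‖x‖ + a) := by
  have h1 := hconv 0 u
  have h2 := hconv u 0
  simp only [sub_zero, zero_sub, norm_neg] at h1 h2
  -- monotonicity: ⟪gradient f u - gradient f 0, u⟫ ≥ 2 lamv ‖u‖^2
  have hmono : 2 * lamv * ‖u‖ ^ 2 ≤ ⟪gradient f u - gradient f 0, u⟫ := by
    have h2' : ⟪gradient f u, -u⟫ = -⟪gradient f u, u⟫ := by simp
    rw [inner_sub_left]
    nlinarith [h1, h2, h2']
  -- gradient f u = - Mᵀ p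
  have hgu : gradient f u = -(Matrix.toEuclideanLin Mᵀ p) := by
    exact eq_neg_of_add_eq_zero_right hfoc
  -- inner product bound with Mᵀ
  have hadj : ⟪Matrix.toEuclideanLin Mᵀ p, u⟫ = ⟪p, Matrix.toEuclideanLin M u⟫ := by
    have h := Matrix.toEuclideanLin_conjTranspose_eq_adjoint M
    rw [Matrix.conjTranspose_eq_transpose_of_trivial] at h
    rw [h, LinearMap.adjoint_inner_left]
  have hMt : |⟪Matrix.toEuclideanLin Mᵀ p, u⟫| ≤ L * ‖p‖ * ‖u‖ := by
    rw [hadj]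
    calc |⟪p, Matrix.toEuclideanLin M u⟫| ≤ ‖p‖ * ‖Matrix.toEuclideanLin M u‖ :=
          abs_real_inner_le_norm _ _
      _ ≤ ‖p‖ * (L * ‖u‖) :=
          mul_le_mul_of_nonneg_left (hMbound u) (norm_nonneg _)
      _ = L * ‖p‖ * ‖u‖ := by ring
  have hg0 : ⟪-(gradient f 0), u⟫ ≤ L * (1 + ‖x‖ + a) * ‖u‖ := by
    calc ⟪-(gradient f 0), u⟫ ≤ ‖-(gradient f 0)‖ * ‖u‖ := real_inner_le_norm _ _
      _ ≤ L * (1 + ‖x‖ + a) * ‖u‖ := by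
          rw [norm_neg]
          exact mul_le_mul_of_nonneg_right hgrad0 (norm_nonneg _)
  have key : 2 * lamv * ‖u‖ ^ 2 ≤ L * (1 + ‖p‖ + ‖x‖ + a) * ‖u‖ := by
    have : ⟪gradient f u - gradient f 0, u⟫
        = -⟪Matrix.toEuclideanLin Mᵀ p, u⟫ + ⟪-(gradient f 0), u⟫ := by
      rw [inner_sub_left, hgu]
      simp [inner_neg_left]
      ring
    rw [this] at hmono
    have hneg : -⟪Matrix.toEuclideanLin Mᵀ p, u⟫ ≤ L * ‖p‖ * ‖u‖ :=
      (neg_le_abs _).trans hMt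
    nlinarith [hmono, hg0]
  rcases eq_or_lt_of_le (norm_nonneg u) with h0 | h0
  · rw [← h0]
    positivity
  · have := (mul_le_mul_iff_of_pos_right h0).mp (by nlinarith [key] : (2 * lamv * ‖u‖) * ‖u‖ ≤ (L * (1 + ‖p‖ + ‖x‖ + a)) * ‖u‖)
    rw [div_mul_eq_mul_div, le_div_iff₀ (by linarith)]
    nlinarith
end

section
/- Let n and d be positive integers, let L, λ₀, λ_v, L₂ be positive reals with 2λ_v > L²L₂/λ₀, and let c ≥ 1. Let f: ℝᵈ → ℝ be continuously differentiable with f(v′) − f(v) ≥ ∇f(v)·(v′−v) + λ_v|v′−v|² and |∇f(v)| ≤ L(c+|v|) for all v, v′ ∈ ℝᵈ. Let A: ℝᵈ → ℝⁿ be continuously differentiable, and suppose its Jacobian DA(v) ∈ ℝ^{n×d} satisfies, for all v, v′ ∈ ℝᵈ: |DA(v)w| ≤ L|w| for every w ∈ ℝᵈ; qᵀ(DA(v)DA(v)ᵀ)q ≥ λ₀|q|² for every q ∈ ℝⁿ; and |(DA(v′)−DA(v))w| ≤ (L₂|v′−v|/(c + max(|v|,|v′|)))·|w| for every w ∈ ℝᵈ.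 Then for every q ∈ ℝⁿ the function v ↦ f(v) + A(v)·q attains its infimum over ℝᵈ at a unique point φ(q), and φ(q) is the unique solution v ∈ ℝᵈ of the first-order equation DA(v)ᵀq + ∇f(v) = 0. -/
open scoped RealInnerProductSpace
open Filter InnerProductSpace

set_option maxHeartbeats 1000000

/-- Well-definedness of the minimizing map: under strong convexity and growth of `f`,
boundedness, ellipticity and incremental Lipschitz continuity of the Jacobian of `A`,
and the condition `2 λ_v > L² L₂ / λ₀`, for every `q` the Lagrangian
`v ↦ f(v) + A(v)·q` has a unique minimizer, which is also the unique solution of the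
first-order condition `DA(v)ᵀ q + ∇f(v) = 0`. -/
theorem lagrangian_unique_minimizer
    (n d : ℕ) (hn : 0 < n) (hd : 0 < d)
    (L lam0 lamv L2 : ℝ) (hL : 0 < L) (hlam0 : 0 < lam0) (hlamv : 0 < lamv) (hL2 : 0 < L2)
    (hcond : 2 * lamv > L ^ 2 * L2 / lam0)
    (c : ℝ) (hc : 1 ≤ c)
    (f : EuclideanSpace ℝ (Fin d) → ℝ) (hf : ContDiff ℝ 1 f)
    (hconv : ∀ v v' : EuclideanSpace ℝ (Fin d),
      f v' - f v ≥ ⟪gradient f v, v' - v⟫ + lamv * ‖v' - v‖ ^ 2)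
    (hgrad : ∀ v : EuclideanSpace ℝ (Fin d), ‖gradient f v‖ ≤ L * (c + ‖v‖))
    (A : EuclideanSpace ℝ (Fin d) → EuclideanSpace ℝ (Fin n)) (hA : ContDiff ℝ 1 A)
    (hDAbound : ∀ (v w : EuclideanSpace ℝ (Fin d)), ‖fderiv ℝ A v w‖ ≤ L * ‖w‖)
    (hDAell : ∀ (v : EuclideanSpace ℝ (Fin d)) (q : EuclideanSpace ℝ (Fin n)),
      ⟪fderiv ℝ A v ((fderiv ℝ A v).adjoint q), q⟫ ≥ lam0 * ‖q‖ ^ 2)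
    (hDAlip : ∀ (v v' w : EuclideanSpace ℝ (Fin d)),
      ‖(fderiv ℝ A v' - fderiv ℝ A v) w‖ ≤ L2 * ‖v' - v‖ / (c + max ‖v‖ ‖v'‖) * ‖w‖) :
    ∀ q : EuclideanSpace ℝ (Fin n), ∃ φ : EuclideanSpace ℝ (Fin d),
      (∀ v, f φ + ⟪A φ, q⟫ ≤ f v + ⟪A v, q⟫) ∧
      (∀ v, (∀ u, f v + ⟪A v, q⟫ ≤ f u + ⟪A u, q⟫) → v = φ) ∧
      ((fderiv ℝ A φ).adjoint q + gradient f φ = 0) ∧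
      (∀ v, (fderiv ℝ A v).adjoint q + gradient f v = 0 → v = φ) := by
  intro q
  have hfd : Differentiable ℝ f := hf.differentiable one_ne_zero
  have hAd : Differentiable ℝ A := hA.differentiable one_ne_zero
  set g : EuclideanSpace ℝ (Fin d) → ℝ := fun v => f v + ⟪A v, q⟫ with hgdef
  -- gradient of g
  have hgg : ∀ v, HasGradientAt g ((fderiv ℝ A v).adjoint q + gradient f v) v := by
    intro v
    have h1 : HasFDerivAt A (fderiv ℝ A v) v := (hAd v).hasFDerivAt
    have h2 : HasFDerivAt (fun v => (innerSL ℝ q) (A v))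
        ((innerSL ℝ q).comp (fderiv ℝ A v)) v :=
      ((innerSL ℝ q).hasFDerivAt).comp v h1
    have heq : (fun v => ⟪A v, q⟫) = fun v => (innerSL ℝ q) (A v) := by
      funext v; rw [innerSL_apply_apply, real_inner_comm]
    have h3 : (InnerProductSpace.toDual ℝ (EuclideanSpace ℝ (Fin d)))
        ((fderiv ℝ A v).adjoint q + gradient f v)
        = (innerSL ℝ q).comp (fderiv ℝ A v) + fderiv ℝ f v := by
      ext w
      have hgw : ⟪gradient f v, w⟫ = fderiv ℝ f v w := by
        rw [gradient]; exact toDual_symm_apply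
      simp only [toDual_apply_apply, inner_add_left, ContinuousLinearMap.adjoint_inner_left,
        ContinuousLinearMap.add_apply, ContinuousLinearMap.comp_apply, innerSL_apply_apply, hgw]
    rw [hasGradientAt_iff_hasFDerivAt, h3]
    have h4 : HasFDerivAt g ((innerSL ℝ q).comp (fderiv ℝ A v) + fderiv ℝ f v) v := by
      have := ((hfd v).hasFDerivAt).add (heq ▸ h2)
      rw [add_comm]; exact this
    exact h4
  -- every minimizer is a critical point
  have hmin_crit : ∀ v, (∀ u, g v ≤ g u) →
      (fderiv ℝ A v).adjoint q + gradient f v = 0 := by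
    intro v hv
    have hloc : IsLocalMin g v := Filter.Eventually.of_forall hv
    have h0 := hloc.hasFDerivAt_eq_zero (hgg v).hasFDerivAt
    exact (InnerProductSpace.toDual ℝ _).map_eq_zero_iff.mp h0
  -- uniqueness of critical points
  have key : ∀ v v', (fderiv ℝ A v).adjoint q + gradient f v = 0 →
      (fderiv ℝ A v').adjoint q + gradient f v' = 0 → v' = v := by
    intro v v' hv hv'
    by_contra hne
    have hD : (0:ℝ) < ‖v' - v‖ := by
      rw [norm_pos_iff]; exact sub_ne_zero.mpr hne
    set D := ‖v' - v‖ with hDdef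
    set M := c + max ‖v‖ ‖v'‖ with hMdef
    have hM : (0:ℝ) < M := by
      have : (0:ℝ) ≤ max ‖v‖ ‖v'‖ := le_max_of_le_left (norm_nonneg _)
      linarith
    -- strong monotonicity of gradient f
    have hmono : 2 * lamv * D ^ 2 ≤ ⟪gradient f v' - gradient f v, v' - v⟫ := by
      have h1 := hconv v v'
      have h2 := hconv v' v
      have e1 : ⟪gradient f v', v - v'⟫ = -⟪gradient f v', v' - v⟫ := by
        rw [show v - v' = -(v' - v) by abel, inner_neg_right]
      have e2 : ‖v - v'‖ = ‖v' - v‖ := norm_sub_rev _ _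
      rw [e1, e2] at h2
      rw [inner_sub_left]
      linarith
    -- relation between gradients via criticality
    have hgd : gradient f v' - gradient f v
        = -((fderiv ℝ A v' - fderiv ℝ A v).adjoint q) := by
      have hsub : (fderiv ℝ A v' - fderiv ℝ A v).adjoint
          = (fderiv ℝ A v').adjoint - (fderiv ℝ A v).adjoint :=
        map_sub (ContinuousLinearMap.adjoint) _ _
      have e1 : gradient f v' = -((fderiv ℝ A v').adjoint q) := by
        rw [eq_neg_iff_add_eq_zero, add_comm]; exact hv'
      have e2 : gradient f v = -((fderiv ℝ A v).adjoint q) := by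
        rw [eq_neg_iff_add_eq_zero, add_comm]; exact hv
      rw [e1, e2, hsub]
      simp only [ContinuousLinearMap.sub_apply]
      abel
    -- upper bound on the inner product
    have hub : ⟪gradient f v' - gradient f v, v' - v⟫ ≤ ‖q‖ * (L2 * D / M * D) := by
      set X : EuclideanSpace ℝ (Fin n) := (fderiv ℝ A v' - fderiv ℝ A v) (v' - v) with hXdef
      rw [hgd, inner_neg_left, ContinuousLinearMap.adjoint_inner_left, ← hXdef]
      have h1 : -⟪q, X⟫ ≤ ‖q‖ * ‖X‖ := by
        have h := abs_real_inner_le_norm q X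
        have h' := neg_abs_le ⟪q, X⟫
        linarith
      have h2 : ‖X‖ ≤ L2 * D / M * D := hDAlip v v' (v' - v)
      nlinarith [norm_nonneg q, norm_nonneg X]
    -- bound on ‖q‖
    have hqb : lam0 * ‖q‖ ^ 2 ≤ L ^ 2 * M * ‖q‖ := by
      have h1 := hDAell v q
      have h2 : ⟪fderiv ℝ A v ((fderiv ℝ A v).adjoint q), q⟫
          ≤ ‖fderiv ℝ A v ((fderiv ℝ A v).adjoint q)‖ * ‖q‖ :=
        real_inner_le_norm _ _
      have h3 : ‖fderiv ℝ A v ((fderiv ℝ A v).adjoint q)‖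
          ≤ L * ‖(fderiv ℝ A v).adjoint q‖ := hDAbound v _
      have h4 : ‖(fderiv ℝ A v).adjoint q‖ = ‖gradient f v‖ := by
        have e2 : (fderiv ℝ A v).adjoint q = -(gradient f v) := by
          rw [eq_neg_iff_add_eq_zero]; exact hv
        rw [e2, norm_neg]
      have h5 : ‖gradient f v‖ ≤ L * (c + ‖v‖) := hgrad v
      have h6 : L * (c + ‖v‖) ≤ L * M := by
        have : c + ‖v‖ ≤ M := by
          rw [hMdef]; exact add_le_add_right (le_max_left _ _) c
        exact mul_le_mul_of_nonneg_left this hL.le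
      have h3' := mul_le_mul_of_nonneg_right h3 (norm_nonneg q)
      rw [h4] at h3'
      have h5' := mul_le_mul_of_nonneg_right
        (mul_le_mul_of_nonneg_left h5 hL.le) (norm_nonneg q)
      have h6' := mul_le_mul_of_nonneg_right
        (mul_le_mul_of_nonneg_left h6 hL.le) (norm_nonneg q)
      nlinarith [h3', h5', h6']
    have hq : lam0 * ‖q‖ ≤ L ^ 2 * M := by
      rcases eq_or_lt_of_le (norm_nonneg q) with h0 | h0
      · have : ‖q‖ = 0 := h0.symm
        rw [this, mul_zero]
        positivity
      · nlinarith
    have hcond' : L ^ 2 * L2 < 2 * lamv * lam0 := by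
      rw [gt_iff_lt, div_lt_iff₀ hlam0] at hcond
      linarith
    -- combine
    have hch : 2 * lamv * D ^ 2 ≤ ‖q‖ * (L2 * D / M * D) := hmono.trans hub
    have hch2 : 2 * lamv * D ^ 2 * M ≤ ‖q‖ * L2 * D ^ 2 := by
      have : ‖q‖ * (L2 * D / M * D) = ‖q‖ * L2 * D ^ 2 / M := by ring
      rw [this] at hch
      exact (le_div_iff₀ hM).mp hch
    nlinarith [mul_le_mul_of_nonneg_right hq (by positivity : (0:ℝ) ≤ L2 * D ^ 2),
      mul_lt_mul_of_pos_right hcond' (mul_pos (pow_pos hD 2) hM),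
      mul_le_mul_of_nonneg_left hch2 hlam0.le,
      pow_pos hD 2, norm_nonneg q]
  -- existence of a minimizer via coercivity
  have hgcont : Continuous g := by
    exact (hf.continuous).add ((hA.continuous).inner continuous_const)
  have hAlip : ∀ v : EuclideanSpace ℝ (Fin d), ‖A v - A 0‖ ≤ L * ‖v‖ := by
    intro v
    have := (convex_univ : Convex ℝ (Set.univ : Set (EuclideanSpace ℝ (Fin d)))).norm_image_sub_le_of_norm_fderiv_le
      (fun x _ => hAd x)
      (fun x _ => ContinuousLinearMap.opNorm_le_bound _ hL.le (hDAbound x))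
      (Set.mem_univ 0) (Set.mem_univ v)
    simpa using this
  set C1 : ℝ := ‖gradient f 0‖ + L * ‖q‖ with hC1def
  set C0 : ℝ := f 0 - ‖A 0‖ * ‖q‖ with hC0def
  have hlb : ∀ v, lamv * ‖v‖ ^ 2 - C1 * ‖v‖ + C0 ≤ g v := by
    intro v
    have h1 := hconv 0 v
    have h2 : ⟪gradient f 0, v⟫ ≥ -(‖gradient f 0‖ * ‖v‖) := by
      have := abs_real_inner_le_norm (gradient f 0) v
      have h := neg_abs_le ⟪gradient f 0, v⟫
      linarith
    have h3 : ⟪A v, q⟫ ≥ -((‖A 0‖ + L * ‖v‖) * ‖q‖) := by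
      have hAv : ‖A v‖ ≤ ‖A 0‖ + L * ‖v‖ := by
        have := hAlip v
        have h := norm_sub_norm_le (A v) (A 0)
        linarith
      have h4 := abs_real_inner_le_norm (A v) q
      have h5 := neg_abs_le ⟪A v, q⟫
      nlinarith [norm_nonneg q]
    simp only [sub_zero] at h1
    simp only [hgdef, hC1def, hC0def]
    nlinarith
  have hcoer : Tendsto g (cocompact (EuclideanSpace ℝ (Fin d))) atTop := by
    have hpoly : Tendsto (fun t : ℝ => lamv * t ^ 2 - C1 * t + C0) atTop atTop := by
      have h1 : Tendsto (fun t : ℝ => t * (lamv * t - C1)) atTop atTop := by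
        apply Tendsto.atTop_mul_atTop₀ tendsto_id
        exact tendsto_atTop_add_const_right _ (-C1)
          (tendsto_id.const_mul_atTop hlamv)
      have h2 := tendsto_atTop_add_const_right _ C0 h1
      refine h2.congr (fun t => by ring)
    have := hpoly.comp (tendsto_norm_cocompact_atTop
      (E := EuclideanSpace ℝ (Fin d)))
    exact tendsto_atTop_mono hlb this
  obtain ⟨φ, hφ⟩ := hgcont.exists_forall_le' 0
    (hcoer.eventually_ge_atTop (g 0))
  have hcritφ := hmin_crit φ hφ
  exact ⟨φ, hφ, fun v hv => key φ v hcritφ (hmin_crit v hv), hcritφ,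
    fun v hv => key φ v hcritφ hv⟩
end

section
/- Let n and d be positive integers, let L, λ₀, λ_v, L₂ be positive reals with 2λ_v > L²L₂/λ₀, and let c ≥ 1. Let f: ℝᵈ → ℝ be continuously differentiable with f(v′) − f(v) ≥ ∇f(v)·(v′−v) + λ_v|v′−v|² and |∇f(v)| ≤ L(c+|v|) for all v, v′ ∈ ℝᵈ. Let A: ℝᵈ → ℝⁿ be continuously differentiable, and suppose its Jacobian DA(v) ∈ ℝ^{n×d} satisfies, for all v, v′ ∈ ℝᵈ: |DA(v)w| ≤ L|w| for every w ∈ ℝᵈ; qᵀ(DA(v)DA(v)ᵀ)q ≥ λ₀|q|² for every q ∈ ℝⁿ; and |(DA(v′)−DA(v))w| ≤ (L₂|v′−v|/(c + max(|v|,|v′|)))·|w| for every w ∈ ℝᵈ. For q ∈ ℝⁿ let φ(q) denote the unique minimizer of v ↦ f(v) + A(v)·q over ℝᵈ. Then φ is globally Lipschitz: |φ(q′) − φ(q)| ≤ L|q′−q|/(2λ_v − L²L₂/λ₀) for all q, q′ ∈ ℝⁿ. -/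
open scoped RealInnerProductSpace

set_option maxHeartbeats 1000000 in
/-- Lipschitz continuity of the minimizing map `φ` of the Lagrangian `v ↦ f(v) + A(v)·q`
in the adjoint variable `q`:
`|φ(q') − φ(q)| ≤ L |q'−q| / (2 λ_v − L² L₂ / λ₀)`. -/
theorem lagrangian_minimizer_lipschitz
    (n d : ℕ) (hn : 0 < n) (hd : 0 < d)
    (L lam0 lamv L2 : ℝ) (hL : 0 < L) (hlam0 : 0 < lam0) (hlamv : 0 < lamv) (hL2 : 0 < L2)
    (hcond : 2 * lamv > L ^ 2 * L2 / lam0)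
    (c : ℝ) (hc : 1 ≤ c)
    (f : EuclideanSpace ℝ (Fin d) → ℝ) (hf : ContDiff ℝ 1 f)
    (hconv : ∀ v v' : EuclideanSpace ℝ (Fin d),
      f v' - f v ≥ ⟪gradient f v, v' - v⟫ + lamv * ‖v' - v‖ ^ 2)
    (hgrad : ∀ v : EuclideanSpace ℝ (Fin d), ‖gradient f v‖ ≤ L * (c + ‖v‖))
    (A : EuclideanSpace ℝ (Fin d) → EuclideanSpace ℝ (Fin n)) (hA : ContDiff ℝ 1 A)
    (hDAbound : ∀ (v w : EuclideanSpace ℝ (Fin d)), ‖fderiv ℝ A v w‖ ≤ L * ‖w‖)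
    (hDAell : ∀ (v : EuclideanSpace ℝ (Fin d)) (q : EuclideanSpace ℝ (Fin n)),
      ⟪fderiv ℝ A v ((fderiv ℝ A v).adjoint q), q⟫ ≥ lam0 * ‖q‖ ^ 2)
    (hDAlip : ∀ (v v' w : EuclideanSpace ℝ (Fin d)),
      ‖(fderiv ℝ A v' - fderiv ℝ A v) w‖ ≤ L2 * ‖v' - v‖ / (c + max ‖v‖ ‖v'‖) * ‖w‖)
    (φ : EuclideanSpace ℝ (Fin n) → EuclideanSpace ℝ (Fin d))
    (hφmin : ∀ (q : EuclideanSpace ℝ (Fin n)) (v : EuclideanSpace ℝ (Fin d)),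
      f (φ q) + ⟪A (φ q), q⟫ ≤ f v + ⟪A v, q⟫)
    (hφuniq : ∀ (q : EuclideanSpace ℝ (Fin n)) (v : EuclideanSpace ℝ (Fin d)),
      (∀ u, f v + ⟪A v, q⟫ ≤ f u + ⟪A u, q⟫) → v = φ q) :
    ∀ q q' : EuclideanSpace ℝ (Fin n),
      ‖φ q' - φ q‖ ≤ L * ‖q' - q‖ / (2 * lamv - L ^ 2 * L2 / lam0) := by
  intro q q'
  have hfd : Differentiable ℝ f := hf.differentiable one_ne_zero
  have hAd : Differentiable ℝ A := hA.differentiable one_ne_zero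
  -- first-order condition: ∇f(φp) = −(DA(φp))ᵀ p
  have foc : ∀ p : EuclideanSpace ℝ (Fin n),
      gradient f (φ p) = -(ContinuousLinearMap.adjoint (fderiv ℝ A (φ p))) p := by
    intro p
    set v := φ p with hv
    have hGf : HasGradientAt f (gradient f v) v := (hfd v).hasGradientAt
    have hFf : HasFDerivAt f
        ((InnerProductSpace.toDual ℝ (EuclideanSpace ℝ (Fin d))) (gradient f v)) v :=
      hGf.hasFDerivAt
    have hFA : HasFDerivAt A (fderiv ℝ A v) v := (hAd v).hasFDerivAt
    have hinner : HasFDerivAt (fun u => ⟪A u, p⟫)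
        ((innerSL ℝ p).comp (fderiv ℝ A v)) v := by
      have h1 : HasFDerivAt (fun u => (innerSL ℝ p) (A u))
          ((innerSL ℝ p).comp (fderiv ℝ A v)) v :=
        (innerSL ℝ p).hasFDerivAt.comp v hFA
      have heq : (fun u : EuclideanSpace ℝ (Fin d) => ⟪A u, p⟫)
          = fun u => (innerSL ℝ p) (A u) := by
        funext u
        simp only [innerSL_apply_apply]
        exact real_inner_comm _ _
      rw [heq]; exact h1
    have hsum : HasFDerivAt (fun u => f u + ⟪A u, p⟫)
        ((InnerProductSpace.toDual ℝ (EuclideanSpace ℝ (Fin d))) (gradient f v)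
          + (innerSL ℝ p).comp (fderiv ℝ A v)) v := hFf.add hinner
    have hmin : IsLocalMin (fun u => f u + ⟪A u, p⟫) v :=
      Filter.Eventually.of_forall (fun u => hφmin p u)
    have hzero := hmin.hasFDerivAt_eq_zero hsum
    refine ext_inner_right ℝ (fun w => ?_)
    have hw := congrFun (congrArg DFunLike.coe hzero) w
    simp only [ContinuousLinearMap.add_apply, ContinuousLinearMap.comp_apply,
      ContinuousLinearMap.zero_apply, InnerProductSpace.toDual_apply_apply, innerSL_apply_apply] at hw
    have hadj : ⟪(ContinuousLinearMap.adjoint (fderiv ℝ A v)) p, w⟫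
        = ⟪p, fderiv ℝ A v w⟫ := ContinuousLinearMap.adjoint_inner_left _ _ _
    rw [inner_neg_left, hadj]
    linarith
  set v := φ q with hvdef
  set v' := φ q' with hv'def
  set D := ‖v' - v‖ with hDdef
  set K := 2 * lamv - L ^ 2 * L2 / lam0 with hKdef
  have hKpos : 0 < K := by rw [hKdef]; linarith
  have hDnn : 0 ≤ D := norm_nonneg _
  -- strong monotonicity of the gradient
  have hmono : 2 * lamv * D ^ 2 ≤ ⟪gradient f v' - gradient f v, v' - v⟫ := by
    have h1 := hconv v v'
    have h2 := hconv v' v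
    have hnorm : ‖v - v'‖ = ‖v' - v‖ := norm_sub_rev _ _
    have hin : ⟪gradient f v', v - v'⟫ = -⟪gradient f v', v' - v⟫ := by
      rw [← inner_neg_right]; congr 1; abel
    rw [inner_sub_left]
    rw [hnorm, hin] at h2
    linarith
  -- positivity of denominator
  have hcM : 0 < c + max ‖v‖ ‖v'‖ := by
    have h0 : (0:ℝ) ≤ max ‖v‖ ‖v'‖ := le_max_of_le_left (norm_nonneg v)
    linarith
  have hcv' : (0:ℝ) < c + ‖v'‖ := by have := norm_nonneg v'; linarith
  -- bound on ‖q'‖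
  have hadjnorm : ‖(ContinuousLinearMap.adjoint (fderiv ℝ A v')) q'‖ ≤ L * (c + ‖v'‖) := by
    have h := hgrad v'
    rw [foc q', norm_neg] at h
    exact h
  have hq'bound : ‖q'‖ ≤ L ^ 2 * (c + ‖v'‖) / lam0 := by
    rw [le_div_iff₀ hlam0]
    rcases eq_or_lt_of_le (norm_nonneg q') with h0 | h0
    · rw [← h0, zero_mul]; positivity
    · have he := hDAell v' q'
      have hcs : ⟪fderiv ℝ A v' ((ContinuousLinearMap.adjoint (fderiv ℝ A v')) q'), q'⟫
          ≤ ‖fderiv ℝ A v' ((ContinuousLinearMap.adjoint (fderiv ℝ A v')) q')‖ * ‖q'‖ :=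
        real_inner_le_norm _ _
      have hb := hDAbound v' ((ContinuousLinearMap.adjoint (fderiv ℝ A v')) q')
      have hchain : lam0 * ‖q'‖ ^ 2 ≤ L * (L * (c + ‖v'‖)) * ‖q'‖ := by
        calc lam0 * ‖q'‖ ^ 2 ≤ _ := he
          _ ≤ ‖fderiv ℝ A v' ((ContinuousLinearMap.adjoint (fderiv ℝ A v')) q')‖ * ‖q'‖ := hcs
          _ ≤ L * (L * (c + ‖v'‖)) * ‖q'‖ := by
              apply mul_le_mul_of_nonneg_right _ (norm_nonneg q')
              exact hb.trans (mul_le_mul_of_nonneg_left hadjnorm hL.le)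
      nlinarith
  -- main inequality
  have hkey : 2 * lamv * D ^ 2 ≤ L * ‖q' - q‖ * D + L ^ 2 * L2 / lam0 * D ^ 2 := by
    have hsplit : ⟪gradient f v' - gradient f v, v' - v⟫
        = ⟪q - q', fderiv ℝ A v (v' - v)⟫
          + ⟪q', fderiv ℝ A v (v' - v) - fderiv ℝ A v' (v' - v)⟫ := by
      rw [foc q, foc q']
      have e1 : -(ContinuousLinearMap.adjoint (fderiv ℝ A v')) q'
          - -(ContinuousLinearMap.adjoint (fderiv ℝ A v)) q
          = (ContinuousLinearMap.adjoint (fderiv ℝ A v)) (q - q')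
            + ((ContinuousLinearMap.adjoint (fderiv ℝ A v)) q'
              - (ContinuousLinearMap.adjoint (fderiv ℝ A v')) q') := by
        rw [map_sub]; abel
      rw [e1, inner_add_left, inner_sub_left,
        ContinuousLinearMap.adjoint_inner_left, ContinuousLinearMap.adjoint_inner_left,
        ContinuousLinearMap.adjoint_inner_left, inner_sub_right]
    have hb1 : ⟪q - q', fderiv ℝ A v (v' - v)⟫ ≤ L * ‖q' - q‖ * D := by
      calc ⟪q - q', fderiv ℝ A v (v' - v)⟫ ≤ ‖q - q'‖ * ‖fderiv ℝ A v (v' - v)‖ :=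
            real_inner_le_norm _ _
        _ ≤ ‖q - q'‖ * (L * D) :=
            mul_le_mul_of_nonneg_left (hDAbound v (v' - v)) (norm_nonneg _)
        _ = L * ‖q' - q‖ * D := by rw [norm_sub_rev]; ring
    have hb2 : ⟪q', fderiv ℝ A v (v' - v) - fderiv ℝ A v' (v' - v)⟫
        ≤ L ^ 2 * L2 / lam0 * D ^ 2 := by
      have hlip := hDAlip v' v (v' - v)
      rw [norm_sub_rev v v', max_comm ‖v'‖ ‖v‖] at hlip
      have hlip' : ‖fderiv ℝ A v (v' - v) - fderiv ℝ A v' (v' - v)‖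
          ≤ L2 * D / (c + max ‖v‖ ‖v'‖) * D := by
        rw [ContinuousLinearMap.sub_apply] at hlip; exact hlip
      have hfrac : (c + ‖v'‖) / (c + max ‖v‖ ‖v'‖) ≤ 1 := by
        rw [div_le_one hcM]
        exact add_le_add_right (le_max_right _ _) c
      calc ⟪q', fderiv ℝ A v (v' - v) - fderiv ℝ A v' (v' - v)⟫
          ≤ ‖q'‖ * ‖fderiv ℝ A v (v' - v) - fderiv ℝ A v' (v' - v)‖ := real_inner_le_norm _ _
        _ ≤ (L ^ 2 * (c + ‖v'‖) / lam0) * (L2 * D / (c + max ‖v‖ ‖v'‖) * D) := by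
            apply mul_le_mul hq'bound hlip' (norm_nonneg _)
            positivity
        _ = (L ^ 2 * L2 / lam0 * D ^ 2) * ((c + ‖v'‖) / (c + max ‖v‖ ‖v'‖)) := by
            field_simp
        _ ≤ (L ^ 2 * L2 / lam0 * D ^ 2) * 1 := by
            apply mul_le_mul_of_nonneg_left hfrac
            positivity
        _ = L ^ 2 * L2 / lam0 * D ^ 2 := mul_one _
    have hm := hmono
    rw [hsplit] at hm
    linarith
  -- conclude
  rcases eq_or_lt_of_le hDnn with h0 | h0
  · rw [← h0]
    positivity
  · rw [le_div_iff₀ hKpos, hKdef]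
    nlinarith [hkey, h0, mul_pos h0 h0]
end

section
/- Let n and d be positive integers, let L, λ₀, λ_v, L₂ be positive reals with 2λ_v > L²L₂/λ₀, and let c ≥ 1. Let f: ℝᵈ → ℝ be continuously differentiable with f(v′) − f(v) ≥ ∇f(v)·(v′−v) + λ_v|v′−v|² and |∇f(v)| ≤ L(c+|v|) for all v, v′ ∈ ℝᵈ. Let A: ℝᵈ → ℝⁿ be continuously differentiable, and suppose its Jacobian DA(v) ∈ ℝ^{n×d} satisfies, for all v, v′ ∈ ℝᵈ: |DA(v)w| ≤ L|w| for every w ∈ ℝᵈ; qᵀ(DA(v)DA(v)ᵀ)q ≥ λ₀|q|² for every q ∈ ℝⁿ; and |(DA(v′)−DA(v))w| ≤ (L₂|v′−v|/(c + max(|v|,|v′|)))·|w| for every w ∈ ℝᵈ. Define H: ℝⁿ → ℝ by H(q) := min over v ∈ ℝᵈ of (f(v) + A(v)·q), and let φ(q) be the unique minimizer. Then H is differentiable on ℝⁿ and ∇H(q) = A(φ(q)) for every q ∈ ℝⁿ. -/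
open scoped RealInnerProductSpace

set_option maxHeartbeats 1000000 in
/-- Envelope identity for the Hamiltonian: if `φ q` is the (unique) minimizer of the
Lagrangian `v ↦ f(v) + A(v)·q`, then the value function `H(q) = f(φ q) + A(φ q)·q`
(which is the minimum of the Lagrangian) is differentiable with gradient
`∇H(q) = A(φ(q))`. -/
theorem hamiltonian_envelope
    (n d : ℕ) (hn : 0 < n) (hd : 0 < d)
    (L lam0 lamv L2 : ℝ) (hL : 0 < L) (hlam0 : 0 < lam0) (hlamv : 0 < lamv) (hL2 : 0 < L2)
    (hcond : 2 * lamv > L ^ 2 * L2 / lam0)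
    (c : ℝ) (hc : 1 ≤ c)
    (f : EuclideanSpace ℝ (Fin d) → ℝ) (hf : ContDiff ℝ 1 f)
    (hconv : ∀ v v' : EuclideanSpace ℝ (Fin d),
      f v' - f v ≥ ⟪gradient f v, v' - v⟫ + lamv * ‖v' - v‖ ^ 2)
    (hgrad : ∀ v : EuclideanSpace ℝ (Fin d), ‖gradient f v‖ ≤ L * (c + ‖v‖))
    (A : EuclideanSpace ℝ (Fin d) → EuclideanSpace ℝ (Fin n)) (hA : ContDiff ℝ 1 A)
    (hDAbound : ∀ (v w : EuclideanSpace ℝ (Fin d)), ‖fderiv ℝ A v w‖ ≤ L * ‖w‖)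
    (hDAell : ∀ (v : EuclideanSpace ℝ (Fin d)) (q : EuclideanSpace ℝ (Fin n)),
      ⟪fderiv ℝ A v ((fderiv ℝ A v).adjoint q), q⟫ ≥ lam0 * ‖q‖ ^ 2)
    (hDAlip : ∀ (v v' w : EuclideanSpace ℝ (Fin d)),
      ‖(fderiv ℝ A v' - fderiv ℝ A v) w‖ ≤ L2 * ‖v' - v‖ / (c + max ‖v‖ ‖v'‖) * ‖w‖)
    (φ : EuclideanSpace ℝ (Fin n) → EuclideanSpace ℝ (Fin d))
    (hφmin : ∀ (q : EuclideanSpace ℝ (Fin n)) (v : EuclideanSpace ℝ (Fin d)),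
      f (φ q) + ⟪A (φ q), q⟫ ≤ f v + ⟪A v, q⟫)
    (hφuniq : ∀ (q : EuclideanSpace ℝ (Fin n)) (v : EuclideanSpace ℝ (Fin d)),
      (∀ u, f v + ⟪A v, q⟫ ≤ f u + ⟪A u, q⟫) → v = φ q)
    (H : EuclideanSpace ℝ (Fin n) → ℝ)
    (hH : ∀ q : EuclideanSpace ℝ (Fin n), H q = f (φ q) + ⟪A (φ q), q⟫) :
    ∀ q : EuclideanSpace ℝ (Fin n), HasGradientAt H (A (φ q)) q := by
  have hfd : Differentiable ℝ f := hf.differentiable one_ne_zero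
  have hAd : Differentiable ℝ A := hA.differentiable one_ne_zero
  -- operator norm bound on the Jacobian
  have hT : ∀ v, ‖fderiv ℝ A v‖ ≤ L := fun v =>
    ContinuousLinearMap.opNorm_le_bound _ hL.le (hDAbound v)
  -- A is L-Lipschitz
  have hALip : ∀ v v' : EuclideanSpace ℝ (Fin d), ‖A v' - A v‖ ≤ L * ‖v' - v‖ := by
    intro v v'
    exact Convex.norm_image_sub_le_of_norm_fderiv_le (fun x _ => hAd x)
      (fun x _ => hT x) convex_univ (Set.mem_univ v) (Set.mem_univ v')
  -- first-order optimality condition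
  have gq : ∀ q, gradient f (φ q) = -((fderiv ℝ A (φ q)).adjoint q) := by
    intro q
    have h1 : HasFDerivAt f (InnerProductSpace.toDual ℝ _ (gradient f (φ q))) (φ q) :=
      (hfd (φ q)).hasGradientAt.hasFDerivAt
    have h2 : HasFDerivAt (fun v => ⟪A v, q⟫) ((innerSL ℝ q).comp (fderiv ℝ A (φ q))) (φ q) := by
      have := (innerSL ℝ q).hasFDerivAt.comp (φ q) (hAd (φ q)).hasFDerivAt
      exact this.congr_of_eventuallyEq (Filter.Eventually.of_forall fun v => by
        simp only [Function.comp_apply, innerSL_apply_apply]; exact real_inner_comm _ _)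
    have hloc : IsLocalMin (fun v => f v + ⟪A v, q⟫) (φ q) :=
      Filter.Eventually.of_forall (hφmin q)
    have hz := hloc.hasFDerivAt_eq_zero (h1.add h2)
    have hzw : ∀ w, ⟪gradient f (φ q) + (fderiv ℝ A (φ q)).adjoint q, w⟫ = 0 := by
      intro w
      have := congrFun (congrArg DFunLike.coe hz) w
      simp only [ContinuousLinearMap.add_apply, ContinuousLinearMap.coe_comp',
        Function.comp_apply, InnerProductSpace.toDual_apply_apply, innerSL_apply_apply,
        ContinuousLinearMap.zero_apply] at this
      rw [inner_add_left, ContinuousLinearMap.adjoint_inner_left]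
      linarith [this]
    have := hzw (gradient f (φ q) + (fderiv ℝ A (φ q)).adjoint q)
    rw [inner_self_eq_zero] at this
    exact eq_neg_of_add_eq_zero_left this
  -- ⟪T(T†q),q⟫ = ‖T†q‖²
  have hadj_sq : ∀ (v : EuclideanSpace ℝ (Fin d)) (q : EuclideanSpace ℝ (Fin n)),
      ⟪fderiv ℝ A v ((fderiv ℝ A v).adjoint q), q⟫ = ‖(fderiv ℝ A v).adjoint q‖ ^ 2 := by
    intro v q
    rw [real_inner_comm, ← ContinuousLinearMap.adjoint_inner_left,
      real_inner_self_eq_norm_sq]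
  -- ellipticity: lam0‖q‖² ≤ ‖T†q‖²
  have hell : ∀ (v : EuclideanSpace ℝ (Fin d)) (q : EuclideanSpace ℝ (Fin n)),
      lam0 * ‖q‖ ^ 2 ≤ ‖(fderiv ℝ A v).adjoint q‖ ^ 2 := by
    intro v q
    have := hDAell v q
    rw [hadj_sq v q] at this
    linarith
  -- ‖T† q‖ ≤ L ‖q‖
  have hadj_le : ∀ (v : EuclideanSpace ℝ (Fin d)) (q : EuclideanSpace ℝ (Fin n)),
      ‖(fderiv ℝ A v).adjoint q‖ ≤ L * ‖q‖ := by
    intro v q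
    set w := (fderiv ℝ A v).adjoint q with hw
    have h1 : ‖w‖ ^ 2 = ⟪q, fderiv ℝ A v w⟫ := by
      rw [← ContinuousLinearMap.adjoint_inner_left, real_inner_self_eq_norm_sq]
    have h2 : ⟪q, fderiv ℝ A v w⟫ ≤ ‖q‖ * ‖fderiv ℝ A v w‖ := real_inner_le_norm _ _
    have h3 : ‖fderiv ℝ A v w‖ ≤ L * ‖w‖ := hDAbound v w
    have h4 : ‖w‖ ^ 2 ≤ ‖q‖ * (L * ‖w‖) := by
      calc ‖w‖ ^ 2 = ⟪q, fderiv ℝ A v w⟫ := h1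
        _ ≤ ‖q‖ * ‖fderiv ℝ A v w‖ := h2
        _ ≤ ‖q‖ * (L * ‖w‖) := by
            exact mul_le_mul_of_nonneg_left h3 (norm_nonneg _)
    rcases eq_or_lt_of_le (norm_nonneg w) with h | h
    · nlinarith [norm_nonneg q]
    · nlinarith
  -- lam0 ≤ L²
  have hlamL : lam0 ≤ L ^ 2 := by
    set q₁ : EuclideanSpace ℝ (Fin n) := EuclideanSpace.single (⟨0, hn⟩ : Fin n) (1 : ℝ)
    have hq₁ : ‖q₁‖ = 1 := by simp [q₁, EuclideanSpace.norm_single]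
    have h1 := hell 0 q₁
    have h2 := hadj_le 0 q₁
    rw [hq₁] at h1 h2
    nlinarith [norm_nonneg ((fderiv ℝ A 0).adjoint q₁)]
  set s := Real.sqrt lam0 with hs
  have hspos : 0 < s := Real.sqrt_pos.mpr hlam0
  have hs2 : s ^ 2 = lam0 := Real.sq_sqrt hlam0.le
  have hsL : s ≤ L := by
    rw [hs, ← Real.sqrt_sq hL.le]
    exact Real.sqrt_le_sqrt hlamL
  -- bound on ‖q‖ at the optimum
  have hqbound : ∀ q : EuclideanSpace ℝ (Fin n), s * ‖q‖ ≤ L * (c + ‖φ q‖) := by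
    intro q
    have h1 := hell (φ q) q
    have h2 : ‖(fderiv ℝ A (φ q)).adjoint q‖ ≤ L * (c + ‖φ q‖) := by
      have := hgrad (φ q)
      rw [gq q, norm_neg] at this
      exact this
    have h3 : (s * ‖q‖) ^ 2 ≤ (L * (c + ‖φ q‖)) ^ 2 := by
      have := sq_nonneg ‖(fderiv ℝ A (φ q)).adjoint q‖
      nlinarith [norm_nonneg ((fderiv ℝ A (φ q)).adjoint q)]
    have h4 : 0 ≤ s * ‖q‖ := mul_nonneg hspos.le (norm_nonneg _)
    have h5 : 0 ≤ L * (c + ‖φ q‖) := by positivity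
    nlinarith
  -- strong monotonicity of gradient f
  have hmono : ∀ v v' : EuclideanSpace ℝ (Fin d),
      2 * lamv * ‖v' - v‖ ^ 2 ≤ ⟪gradient f v' - gradient f v, v' - v⟫ := by
    intro v v'
    have h1 := hconv v v'
    have h2 := hconv v' v
    have e1 : ⟪gradient f v', v - v'⟫ = -⟪gradient f v', v' - v⟫ := by
      rw [← inner_neg_right, neg_sub]
    have e2 : ‖v - v'‖ = ‖v' - v‖ := norm_sub_rev _ _
    rw [e1, e2] at h2
    rw [inner_sub_left]
    linarith
  set K := 2 * lamv - L * L2 / s with hK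
  have hKpos : 0 < K := by
    have h1 : L * L2 / s ≤ L ^ 2 * L2 / lam0 := by
      rw [div_le_div_iff₀ hspos hlam0]
      calc L * L2 * lam0 = L * L2 * s * s := by rw [← hs2]; ring
        _ ≤ L * L2 * s * L := mul_le_mul_of_nonneg_left hsL (by positivity)
        _ = L ^ 2 * L2 * s := by ring
    rw [hK]
    linarith
  -- φ is Lipschitz
  have hphiLip : ∀ q q' : EuclideanSpace ℝ (Fin n),
      K * ‖φ q' - φ q‖ ≤ L * ‖q' - q‖ := by
    intro q q'
    set v := φ q with hv
    set v' := φ q' with hv'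
    set T := fderiv ℝ A v with hTdef
    set T' := fderiv ℝ A v' with hT'def
    have hm := hmono v v'
    rw [gq q, gq q'] at hm
    -- ⟪-(T'† q') + T† q, v'-v⟫
    have hdec : (-(T'.adjoint q') - -(T.adjoint q))
        = -(T'.adjoint (q' - q)) - ((T' - T).adjoint q) := by
      have : (T' - T).adjoint = T'.adjoint - T.adjoint := map_sub ContinuousLinearMap.adjoint T' T
      rw [this]
      simp [map_sub]
      abel
    rw [hdec] at hm
    have hterm1 : |⟪T'.adjoint (q' - q), v' - v⟫| ≤ L * ‖q' - q‖ * ‖v' - v‖ := by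
      rw [ContinuousLinearMap.adjoint_inner_left]
      calc |⟪q' - q, T' (v' - v)⟫| ≤ ‖q' - q‖ * ‖T' (v' - v)‖ := abs_real_inner_le_norm _ _
        _ ≤ ‖q' - q‖ * (L * ‖v' - v‖) :=
            mul_le_mul_of_nonneg_left (hDAbound v' (v' - v)) (norm_nonneg _)
        _ = L * ‖q' - q‖ * ‖v' - v‖ := by ring
    have hterm2 : |⟪(T' - T).adjoint q, v' - v⟫| ≤ L * L2 / s * ‖v' - v‖ ^ 2 := by
      rw [ContinuousLinearMap.adjoint_inner_left]
      have hcm : (0 : ℝ) < c + max ‖v‖ ‖v'‖ := by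
        have := norm_nonneg v
        have := le_max_left ‖v‖ ‖v'‖
        linarith
      have hb := hDAlip v v' (v' - v)
      have hq : ‖q‖ ≤ L * (c + ‖v‖) / s := by
        rw [le_div_iff₀ hspos]
        have := hqbound q
        rw [← hv] at this
        nlinarith
      calc |⟪q, (T' - T) (v' - v)⟫| ≤ ‖q‖ * ‖(T' - T) (v' - v)‖ := abs_real_inner_le_norm _ _
        _ ≤ (L * (c + ‖v‖) / s) * (L2 * ‖v' - v‖ / (c + max ‖v‖ ‖v'‖) * ‖v' - v‖) := by
            apply mul_le_mul hq hb (norm_nonneg _)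
            positivity
        _ = L * L2 / s * ‖v' - v‖ ^ 2 * ((c + ‖v‖) / (c + max ‖v‖ ‖v'‖)) := by
            field_simp
        _ ≤ L * L2 / s * ‖v' - v‖ ^ 2 * 1 := by
            apply mul_le_mul_of_nonneg_left _ (by positivity)
            rw [div_le_one hcm]
            have := le_max_left ‖v‖ ‖v'‖
            linarith
        _ = L * L2 / s * ‖v' - v‖ ^ 2 := mul_one _
    have hsum : 2 * lamv * ‖v' - v‖ ^ 2 ≤
        L * ‖q' - q‖ * ‖v' - v‖ + L * L2 / s * ‖v' - v‖ ^ 2 := by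
      have e : ⟪-(T'.adjoint (q' - q)) - (T' - T).adjoint q, v' - v⟫
          = -⟪T'.adjoint (q' - q), v' - v⟫ - ⟪(T' - T).adjoint q, v' - v⟫ := by
        rw [inner_sub_left, inner_neg_left]
      rw [e] at hm
      have a1 := neg_abs_le (⟪T'.adjoint (q' - q), v' - v⟫ : ℝ)
      have a2 := neg_abs_le (⟪(T' - T).adjoint q, v' - v⟫ : ℝ)
      linarith [hterm1, hterm2, abs_nonneg (⟪T'.adjoint (q' - q), v' - v⟫ : ℝ)]
    have hKsq : K * ‖v' - v‖ ^ 2 ≤ L * ‖q' - q‖ * ‖v' - v‖ := by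
      rw [hK]; linarith
    rcases eq_or_lt_of_le (norm_nonneg (v' - v)) with h0 | h0
    · rw [← h0, mul_zero]
      positivity
    · have := mul_le_mul_of_nonneg_right hKsq (le_of_lt (inv_pos.mpr h0))
      rw [sq] at this
      calc K * ‖v' - v‖ = K * (‖v' - v‖ * ‖v' - v‖) * ‖v' - v‖⁻¹ := by
            field_simp
        _ ≤ L * ‖q' - q‖ * ‖v' - v‖ * ‖v' - v‖⁻¹ := this
        _ = L * ‖q' - q‖ := by field_simp
  -- envelope sandwich
  intro q₀
  rw [hasGradientAt_iff_isLittleO]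
  have herr : ∀ q' : EuclideanSpace ℝ (Fin n),
      ‖H q' - H q₀ - ⟪A (φ q₀), q' - q₀⟫‖ ≤ (L * L / K) * ‖q' - q₀‖ * ‖q' - q₀‖ := by
    intro q'
    have hup : H q' - H q₀ - ⟪A (φ q₀), q' - q₀⟫ ≤ 0 := by
      have h1 := hφmin q' (φ q₀)
      rw [hH q', hH q₀, inner_sub_right]
      linarith
    have hdn : H q' - H q₀ - ⟪A (φ q₀), q' - q₀⟫ ≥
        -(‖A (φ q') - A (φ q₀)‖ * ‖q' - q₀‖) := by
      have h1 := hφmin q₀ (φ q')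
      have h2 : H q' - H q₀ ≥ ⟪A (φ q'), q' - q₀⟫ := by
        rw [hH q', hH q₀, inner_sub_right]
        linarith
      have h3 : (⟪A (φ q'), q' - q₀⟫ : ℝ) - ⟪A (φ q₀), q' - q₀⟫
          = ⟪A (φ q') - A (φ q₀), q' - q₀⟫ := by rw [inner_sub_left]
      have h4 := abs_real_inner_le_norm (A (φ q') - A (φ q₀)) (q' - q₀)
      have h5 := neg_abs_le (⟪A (φ q') - A (φ q₀), q' - q₀⟫ : ℝ)
      linarith
    have hAb : ‖A (φ q') - A (φ q₀)‖ * ‖q' - q₀‖ ≤ (L * L / K) * ‖q' - q₀‖ * ‖q' - q₀‖ := by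
      have h1 : ‖A (φ q') - A (φ q₀)‖ ≤ L * ‖φ q' - φ q₀‖ := hALip _ _
      have h2 : K * ‖φ q' - φ q₀‖ ≤ L * ‖q' - q₀‖ := hphiLip q₀ q'
      have h3 : ‖φ q' - φ q₀‖ ≤ L * ‖q' - q₀‖ / K := by
        rw [le_div_iff₀ hKpos]; linarith
      have h4 : ‖A (φ q') - A (φ q₀)‖ ≤ L * (L * ‖q' - q₀‖ / K) :=
        le_trans h1 (mul_le_mul_of_nonneg_left h3 hL.le)
      have h5 : L * (L * ‖q' - q₀‖ / K) = L * L / K * ‖q' - q₀‖ := by ring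
      nlinarith [norm_nonneg (q' - q₀)]
    rw [Real.norm_eq_abs, abs_le]
    constructor
    · linarith
    · nlinarith [norm_nonneg (q' - q₀)]
  rw [Asymptotics.isLittleO_iff]
  intro ε hε
  have hC : 0 < L * L / K := by positivity
  rw [Metric.eventually_nhds_iff]
  refine ⟨ε / (L * L / K), by positivity, fun q' hq' => ?_⟩
  have hdist : ‖q' - q₀‖ < ε / (L * L / K) := by
    rwa [← dist_eq_norm]
  calc ‖H q' - H q₀ - ⟪A (φ q₀), q' - q₀⟫‖
      ≤ (L * L / K) * ‖q' - q₀‖ * ‖q' - q₀‖ := herr q'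
    _ ≤ ε * ‖q' - q₀‖ := by
        have : (L * L / K) * ‖q' - q₀‖ ≤ ε := by
          rw [← le_div_iff₀' hC]
          exact hdist.le
        nlinarith [norm_nonneg (q' - q₀)]
end

section
/- Let n and d be positive integers, L, L₁, L₂ ≥ 0, λ₀ > 0 and δ ≥ 0. For i = 1, 2 let x_i ∈ ℝⁿ, a_i ≥ 0, v_i ∈ ℝᵈ, p_i ∈ ℝⁿ, g_i ∈ ℝᵈ, and let M_i be a real n×d matrix. Assume, for i = 1, 2: |M_i w| ≤ L|w| for every w ∈ ℝᵈ, pᵀ(M_iM_iᵀ)p ≥ λ₀|p|² for every p ∈ ℝⁿ, and M_iᵀp_i + g_i = 0. Assume further |g₁| ≤ L(1+|x₁|+a₁+|v₁|), |g₂ − g₁| ≤ L(|x₂−x₁| + δ + |v₂−v₁|), and |(M₂−M₁)w| ≤ [(L₁(|x₂−x₁|+δ) + L₂|v₂−v₁|)/(1 + max(|x₁|,|x₂|) + max(a₁,a₂) + max(|v₁|,|v₂|))]·|w| for every w ∈ ℝᵈ. Then |p₂ − p₁| ≤ (L²/λ₀ + L³L₁/λ₀²)(|x₂−x₁| + δ)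 + (L²/λ₀ + L³L₂/λ₀²)|v₂−v₁|. -/
open scoped RealInnerProductSpace Matrix

lemma toEuclideanLin_mul_apply' {n d m : ℕ} (A : Matrix (Fin n) (Fin d) ℝ)
    (B : Matrix (Fin d) (Fin m) ℝ) (p : EuclideanSpace ℝ (Fin m)) :
    Matrix.toEuclideanLin (A * B) p = Matrix.toEuclideanLin A (Matrix.toEuclideanLin B p) := by
  simp [Matrix.toEuclideanLin_apply, Matrix.mulVec_mulVec]

lemma transpose_adj' {n d : ℕ} (A : Matrix (Fin n) (Fin d) ℝ)
    (x : EuclideanSpace ℝ (Fin n)) (y : EuclideanSpace ℝ (Fin d)) :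
    ⟪Matrix.toEuclideanLin Aᵀ x, y⟫ = ⟪x, Matrix.toEuclideanLin A y⟫ := by
  rw [← Matrix.conjTranspose_eq_transpose_of_trivial,
    Matrix.toEuclideanLin_conjTranspose_eq_adjoint, LinearMap.adjoint_inner_left]

lemma transpose_norm_le' {n d : ℕ} (A : Matrix (Fin n) (Fin d) ℝ) (C : ℝ) (hC : 0 ≤ C)
    (hA : ∀ w : EuclideanSpace ℝ (Fin d), ‖Matrix.toEuclideanLin A w‖ ≤ C * ‖w‖)
    (p : EuclideanSpace ℝ (Fin n)) : ‖Matrix.toEuclideanLin Aᵀ p‖ ≤ C * ‖p‖ := by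
  set y := Matrix.toEuclideanLin Aᵀ p with hy
  have h1 : ‖y‖ ^ 2 = ⟪p, Matrix.toEuclideanLin A y⟫ := by
    rw [← transpose_adj', ← hy, real_inner_self_eq_norm_sq]
  have h2 : ⟪p, Matrix.toEuclideanLin A y⟫ ≤ ‖p‖ * (C * ‖y‖) :=
    le_trans (real_inner_le_norm _ _) (by
      have := hA y
      have hp : (0:ℝ) ≤ ‖p‖ := norm_nonneg _
      nlinarith)
  rcases eq_or_lt_of_le (norm_nonneg y) with h | h
  · rw [← h]; positivity
  · nlinarith [h1, h2]

lemma ell_norm_le' {n : ℕ} (X : Matrix (Fin n) (Fin n) ℝ) (lam0 : ℝ) (hlam0 : 0 < lam0)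
    (hX : ∀ p : EuclideanSpace ℝ (Fin n), ⟪Matrix.toEuclideanLin X p, p⟫ ≥ lam0 * ‖p‖ ^ 2)
    (p : EuclideanSpace ℝ (Fin n)) : lam0 * ‖p‖ ≤ ‖Matrix.toEuclideanLin X p‖ := by
  have h1 := hX p
  have h2 : ⟪Matrix.toEuclideanLin X p, p⟫ ≤ ‖Matrix.toEuclideanLin X p‖ * ‖p‖ :=
    real_inner_le_norm _ _
  rcases eq_or_lt_of_le (norm_nonneg p) with h | h
  · rw [← h]; simp [norm_nonneg]
  · nlinarith

/-- Stability estimate for the adjoint variable in the proof of well-posedness of the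
forward–backward system: along two solutions of the first-order condition one has
`|p₂ − p₁| ≤ (L²/λ₀ + L³L₁/λ₀²)(|x₂−x₁| + δ) + (L²/λ₀ + L³L₂/λ₀²)|v₂−v₁|`. -/
theorem adjoint_stability
    (n d : ℕ) (hn : 0 < n) (hd : 0 < d)
    (L L1 L2 : ℝ) (hL : 0 ≤ L) (hL1 : 0 ≤ L1) (hL2 : 0 ≤ L2)
    (lam0 : ℝ) (hlam0 : 0 < lam0) (δ : ℝ) (hδ : 0 ≤ δ)
    (x1 x2 : EuclideanSpace ℝ (Fin n)) (a1 a2 : ℝ) (ha1 : 0 ≤ a1) (ha2 : 0 ≤ a2)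
    (v1 v2 : EuclideanSpace ℝ (Fin d))
    (p1 p2 : EuclideanSpace ℝ (Fin n)) (g1 g2 : EuclideanSpace ℝ (Fin d))
    (M1 M2 : Matrix (Fin n) (Fin d) ℝ)
    (hM1bound : ∀ w : EuclideanSpace ℝ (Fin d), ‖Matrix.toEuclideanLin M1 w‖ ≤ L * ‖w‖)
    (hM2bound : ∀ w : EuclideanSpace ℝ (Fin d), ‖Matrix.toEuclideanLin M2 w‖ ≤ L * ‖w‖)
    (hM1ell : ∀ p : EuclideanSpace ℝ (Fin n),
      ⟪Matrix.toEuclideanLin (M1 * M1ᵀ) p, p⟫ ≥ lam0 * ‖p‖ ^ 2)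
    (hM2ell : ∀ p : EuclideanSpace ℝ (Fin n),
      ⟪Matrix.toEuclideanLin (M2 * M2ᵀ) p, p⟫ ≥ lam0 * ‖p‖ ^ 2)
    (hfoc1 : Matrix.toEuclideanLin M1ᵀ p1 + g1 = 0)
    (hfoc2 : Matrix.toEuclideanLin M2ᵀ p2 + g2 = 0)
    (hg1 : ‖g1‖ ≤ L * (1 + ‖x1‖ + a1 + ‖v1‖))
    (hdg : ‖g2 - g1‖ ≤ L * (‖x2 - x1‖ + δ + ‖v2 - v1‖))
    (hdM : ∀ w : EuclideanSpace ℝ (Fin d),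
      ‖Matrix.toEuclideanLin (M2 - M1) w‖ ≤
        (L1 * (‖x2 - x1‖ + δ) + L2 * ‖v2 - v1‖) /
          (1 + max ‖x1‖ ‖x2‖ + max a1 a2 + max ‖v1‖ ‖v2‖) * ‖w‖) :
    ‖p2 - p1‖ ≤ (L ^ 2 / lam0 + L ^ 3 * L1 / lam0 ^ 2) * (‖x2 - x1‖ + δ) +
      (L ^ 2 / lam0 + L ^ 3 * L2 / lam0 ^ 2) * ‖v2 - v1‖ := by
  set dx := ‖x2 - x1‖ with hdx
  set dv := ‖v2 - v1‖ with hdv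
  have hdx0 : 0 ≤ dx := norm_nonneg _
  have hdv0 : 0 ≤ dv := norm_nonneg _
  set S := 1 + max ‖x1‖ ‖x2‖ + max a1 a2 + max ‖v1‖ ‖v2‖ with hS
  have hSpos : 0 < S := by
    have h1 : (0:ℝ) ≤ max ‖x1‖ ‖x2‖ := le_max_of_le_left (norm_nonneg _)
    have h2 : (0:ℝ) ≤ max a1 a2 := le_max_of_le_left ha1
    have h3 : (0:ℝ) ≤ max ‖v1‖ ‖v2‖ := le_max_of_le_left (norm_nonneg _)
    positivity
  set num := L1 * (dx + δ) + L2 * dv with hnum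
  have hnum0 : 0 ≤ num := by positivity
  have hC0 : 0 ≤ num / S := by positivity
  -- bound on p1
  have hS1 : 1 + ‖x1‖ + a1 + ‖v1‖ ≤ S := by
    have h1 : ‖x1‖ ≤ max ‖x1‖ ‖x2‖ := le_max_left _ _
    have h2 : a1 ≤ max a1 a2 := le_max_left _ _
    have h3 : ‖v1‖ ≤ max ‖v1‖ ‖v2‖ := le_max_left _ _
    rw [hS]; linarith
  have hM1tp1 : Matrix.toEuclideanLin M1ᵀ p1 = -g1 := eq_neg_of_add_eq_zero_left hfoc1
  have hM2tp2 : Matrix.toEuclideanLin M2ᵀ p2 = -g2 := eq_neg_of_add_eq_zero_left hfoc2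
  have hp1 : lam0 * ‖p1‖ ≤ L ^ 2 * (1 + ‖x1‖ + a1 + ‖v1‖) := by
    have h1 := ell_norm_le' (M1 * M1ᵀ) lam0 hlam0 hM1ell p1
    rw [toEuclideanLin_mul_apply', hM1tp1] at h1
    have h2 := hM1bound (-g1 : EuclideanSpace ℝ (Fin d))
    rw [norm_neg] at h2
    have h3 : L * ‖g1‖ ≤ L * (L * (1 + ‖x1‖ + a1 + ‖v1‖)) :=
      mul_le_mul_of_nonneg_left hg1 hL
    have h4 : L * (L * (1 + ‖x1‖ + a1 + ‖v1‖)) = L ^ 2 * (1 + ‖x1‖ + a1 + ‖v1‖) := by ring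
    linarith
  -- decomposition of M2ᵀ (p2 - p1)
  have hdecomp : Matrix.toEuclideanLin M2ᵀ (p2 - p1) =
      -(g2 - g1) - Matrix.toEuclideanLin (M2 - M1)ᵀ p1 := by
    have hsub : (M2 - M1)ᵀ = M2ᵀ - M1ᵀ := Matrix.transpose_sub _ _
    rw [map_sub, hM2tp2, hsub, map_sub, LinearMap.sub_apply, hM1tp1]
    abel
  -- bound transpose of difference
  have hdMt : ‖Matrix.toEuclideanLin (M2 - M1)ᵀ p1‖ ≤ num / S * ‖p1‖ :=
    transpose_norm_le' _ _ hC0 hdM p1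
  -- combine
  have hkey : ‖Matrix.toEuclideanLin M2ᵀ (p2 - p1)‖ ≤
      L * (dx + δ + dv) + num * L ^ 2 / lam0 := by
    rw [hdecomp]
    have h1 : ‖-(g2 - g1) - Matrix.toEuclideanLin (M2 - M1)ᵀ p1‖ ≤
        ‖g2 - g1‖ + ‖Matrix.toEuclideanLin (M2 - M1)ᵀ p1‖ := by
      calc _ ≤ ‖-(g2 - g1)‖ + ‖Matrix.toEuclideanLin (M2 - M1)ᵀ p1‖ := norm_sub_le _ _
        _ = _ := by rw [norm_neg]
    have hp1' : ‖p1‖ ≤ L ^ 2 * S / lam0 := by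
      rw [le_div_iff₀ hlam0]
      have h4 : L ^ 2 * (1 + ‖x1‖ + a1 + ‖v1‖) ≤ L ^ 2 * S :=
        mul_le_mul_of_nonneg_left hS1 (by positivity)
      linarith
    have h2 : num / S * ‖p1‖ ≤ num * L ^ 2 / lam0 := by
      calc num / S * ‖p1‖ ≤ num / S * (L ^ 2 * S / lam0) := by
            apply mul_le_mul_of_nonneg_left hp1' hC0
        _ = num * L ^ 2 / lam0 := by field_simp
    linarith [hdg, hdMt]
  -- ellipticity for the difference
  have hfin : lam0 * ‖p2 - p1‖ ≤ L * (L * (dx + δ + dv) + num * L ^ 2 / lam0) := by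
    have h1 := ell_norm_le' (M2 * M2ᵀ) lam0 hlam0 hM2ell (p2 - p1)
    have h2 := hM2bound (Matrix.toEuclideanLin M2ᵀ (p2 - p1))
    rw [toEuclideanLin_mul_apply'] at h1
    have h3 : L * ‖Matrix.toEuclideanLin M2ᵀ (p2 - p1)‖ ≤
        L * (L * (dx + δ + dv) + num * L ^ 2 / lam0) :=
      mul_le_mul_of_nonneg_left hkey hL
    linarith
  have hl : 0 < lam0 ^ 2 := by positivity
  rw [← mul_le_mul_iff_right₀ hlam0]
  calc lam0 * ‖p2 - p1‖ ≤ L * (L * (dx + δ + dv) + num * L ^ 2 / lam0) := hfin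
    _ = lam0 * ((L ^ 2 / lam0 + L ^ 3 * L1 / lam0 ^ 2) * (dx + δ) +
        (L ^ 2 / lam0 + L ^ 3 * L2 / lam0 ^ 2) * dv) := by
      rw [hnum]; field_simp; ring
end

section
/- Let n and d be positive integers, λ_v, λ₀ > 0 and L, L₂ ≥ 0 with 2λ_v > L²L₂/λ₀, and let D > 0 and κ ≥ 0 be reals. Let g: ℝᵈ → ℝᵈ satisfy (g(v′) − g(v))·(v′−v) ≥ 2λ_v|v′−v|² for all v, v′ ∈ ℝᵈ, and let N and N′ be real n×d matrices with |Nw| ≤ L|w| for every w ∈ ℝᵈ. Suppose u, u′ ∈ ℝᵈ, p, p′ ∈ ℝⁿ and e ∈ ℝᵈ satisfy: Nᵀp + g(u) = 0; (N′)ᵀp′ + g(u′) + e = 0; |(N′−N)w| ≤ ((κ + L₂|u′−u|)/D)·|w| for every w ∈ ℝᵈ; and |p′| ≤ (L²/λ₀)D. Then (2λ_v − L²L₂/λ₀)·|u′−u| ≤ L|p′−p| + (L²/λ₀)κ + |e|. -/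
set_option maxHeartbeats 1000000

open scoped RealInnerProductSpace Matrix

lemma transpose_inner_aux (n d : ℕ) (M : Matrix (Fin n) (Fin d) ℝ)
    (q : EuclideanSpace ℝ (Fin n)) (w : EuclideanSpace ℝ (Fin d)) :
    ⟪Matrix.toEuclideanLin Mᵀ q, w⟫ = ⟪q, Matrix.toEuclideanLin M w⟫ := by
  have : Mᵀ = Mᴴ := by ext i j; simp [Matrix.conjTranspose]
  rw [this, Matrix.toEuclideanLin_conjTranspose_eq_adjoint, LinearMap.adjoint_inner_left]

/-- Abstract stability estimate for solutions of perturbed strongly monotone first-order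
conditions: `(2 λ_v − L² L₂/λ₀)|u′−u| ≤ L|p′−p| + (L²/λ₀)κ + |e|`. -/
theorem perturbed_foc_stability
    (n d : ℕ) (hn : 0 < n) (hd : 0 < d)
    (lamv lam0 : ℝ) (hlamv : 0 < lamv) (hlam0 : 0 < lam0)
    (L L2 : ℝ) (hL : 0 ≤ L) (hL2 : 0 ≤ L2)
    (hcond : 2 * lamv > L ^ 2 * L2 / lam0)
    (D κ : ℝ) (hD : 0 < D) (hκ : 0 ≤ κ)
    (g : EuclideanSpace ℝ (Fin d) → EuclideanSpace ℝ (Fin d))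
    (hmono : ∀ v v' : EuclideanSpace ℝ (Fin d),
      ⟪g v' - g v, v' - v⟫ ≥ 2 * lamv * ‖v' - v‖ ^ 2)
    (N N' : Matrix (Fin n) (Fin d) ℝ)
    (hNbound : ∀ w : EuclideanSpace ℝ (Fin d), ‖Matrix.toEuclideanLin N w‖ ≤ L * ‖w‖)
    (u u' : EuclideanSpace ℝ (Fin d)) (p p' : EuclideanSpace ℝ (Fin n))
    (e : EuclideanSpace ℝ (Fin d))
    (hfoc : Matrix.toEuclideanLin Nᵀ p + g u = 0)
    (hfoc' : Matrix.toEuclideanLin N'ᵀ p' + g u' + e = 0)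
    (hdN : ∀ w : EuclideanSpace ℝ (Fin d),
      ‖Matrix.toEuclideanLin (N' - N) w‖ ≤ (κ + L2 * ‖u' - u‖) / D * ‖w‖)
    (hp' : ‖p'‖ ≤ L ^ 2 / lam0 * D) :
    (2 * lamv - L ^ 2 * L2 / lam0) * ‖u' - u‖ ≤
      L * ‖p' - p‖ + L ^ 2 / lam0 * κ + ‖e‖ := by
  set δ : EuclideanSpace ℝ (Fin d) := u' - u with hδ
  set r : ℝ := ‖δ‖ with hr
  have hr0 : 0 ≤ r := norm_nonneg _
  rcases eq_or_lt_of_le hr0 with hr0' | hrpos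
  · rw [← hr0']
    have : 0 ≤ L * ‖p' - p‖ + L ^ 2 / lam0 * κ + ‖e‖ := by positivity
    linarith
  have e1 : g u' - g u = Matrix.toEuclideanLin Nᵀ p - Matrix.toEuclideanLin N'ᵀ p' - e := by
    have h1 : Matrix.toEuclideanLin Nᵀ p = -(g u) := by
      rwa [add_eq_zero_iff_eq_neg] at hfoc
    have h2 : Matrix.toEuclideanLin N'ᵀ p' = -(g u') - e := by
      have h := hfoc'
      rw [add_assoc, add_eq_zero_iff_eq_neg] at h
      rw [h]; abel
    rw [h1, h2]; abel
  have t1 := transpose_inner_aux n d N p δ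
  have t2 := transpose_inner_aux n d N' p' δ
  have e2 : ⟪g u' - g u, δ⟫ =
      ⟪p - p', Matrix.toEuclideanLin N δ⟫ - ⟪p', Matrix.toEuclideanLin (N' - N) δ⟫ - ⟪e, δ⟫ := by
    rw [e1]
    simp only [inner_sub_left, inner_sub_right, map_sub, LinearMap.sub_apply, t1, t2]
    ring
  have b1 : ⟪p - p', Matrix.toEuclideanLin N δ⟫ ≤ ‖p' - p‖ * (L * r) := by
    calc ⟪p - p', Matrix.toEuclideanLin N δ⟫ ≤ ‖p - p'‖ * ‖Matrix.toEuclideanLin N δ‖ :=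
          real_inner_le_norm _ _
      _ ≤ ‖p' - p‖ * (L * r) := by
          rw [norm_sub_rev]
          exact mul_le_mul_of_nonneg_left (hNbound δ) (norm_nonneg _)
  have b2 : -⟪p', Matrix.toEuclideanLin (N' - N) δ⟫ ≤ ‖p'‖ * ((κ + L2 * r) / D * r) := by
    calc -⟪p', Matrix.toEuclideanLin (N' - N) δ⟫ ≤ ‖p'‖ * ‖Matrix.toEuclideanLin (N' - N) δ‖ := by
          have := abs_real_inner_le_norm p' (Matrix.toEuclideanLin (N' - N) δ)
          have := neg_abs_le (⟪p', Matrix.toEuclideanLin (N' - N) δ⟫)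
          linarith
      _ ≤ ‖p'‖ * ((κ + L2 * r) / D * r) :=
          mul_le_mul_of_nonneg_left (hdN δ) (norm_nonneg _)
  have b3 : -⟪e, δ⟫ ≤ ‖e‖ * r := by
    have := abs_real_inner_le_norm e δ
    have := neg_abs_le (⟪e, δ⟫)
    linarith
  have hm := hmono u u'
  rw [← hδ, ← hr, e2] at hm
  have hfac : 0 ≤ (κ + L2 * r) / D * r := by positivity
  have b4 : ‖p'‖ * ((κ + L2 * r) / D * r) ≤ (L ^ 2 / lam0 * D) * ((κ + L2 * r) / D * r) :=
    mul_le_mul_of_nonneg_right hp' hfac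
  have cD : (L ^ 2 / lam0 * D) * ((κ + L2 * r) / D * r)
      = L ^ 2 / lam0 * κ * r + L ^ 2 * L2 / lam0 * r ^ 2 := by
    field_simp
  have key : 2 * lamv * r ^ 2 ≤
      ‖p' - p‖ * (L * r) + (L ^ 2 / lam0 * κ * r + L ^ 2 * L2 / lam0 * r ^ 2) + ‖e‖ * r := by
    nlinarith [b1, b2, b3, b4, hm, cD]
  rw [← mul_le_mul_iff_of_pos_right hrpos]
  nlinarith [key]
end
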